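/- If s is a global minimizer of the cubic model m(s) with parameter σ > 0, then ∇²f(x) + (σ/2)‖s‖·I is positive semidefinite; in particular λ_min(∇²f(x)) ≥ −(σ/2)‖s‖. -/

import Mathlib

/-!
Write `λ = σ‖s‖/2`. Since `s` minimizes the model, its derivative vanishes there:
`g + (H + H*)s/2 + λ s = 0`. For a point `w = s + α v` on the sphere `‖w‖ = ‖s‖` the cubic
term does not change, and this stationarity condition turns `m w - m s ≥ 0` into
`α² ⟪v, (H + λ) v⟫ / 2 ≥ 0`. Every direction `v` with `⟪s, v⟫ ≠ 0` is of this form, and these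
directions are dense when `s ≠ 0`. When `s = 0`, the model along a ray is
`α² ⟪v, H v⟫ / 2 + O(|α|³)`, so `⟪v, H v⟫ ≥ 0`.
-/

open scoped RealInnerProductSpace

open Filter Topology

variable {E : Type*} [NormedAddCommGroup E] [InnerProductSpace ℝ E]

noncomputable def cubicModel (g : E) (H : E →L[ℝ] E) (σ : ℝ) (t : E) : ℝ :=
  ⟪g, t⟫ + 1 / 2 * ⟪t, H t⟫ + σ / 6 * ‖t‖ ^ 3

theorem nonneg_at_zero_of_forall_ne_zero {φ : ℝ → ℝ} (hφ : Continuous φ)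
    (h : ∀ ε ≠ 0, 0 ≤ φ ε) : 0 ≤ φ 0 :=
  ge_of_tendsto ((hφ.tendsto 0).mono_left nhdsWithin_le_nhds : Tendsto φ (𝓝[≠] 0) _)
    (eventually_nhdsWithin_of_forall h)

namespace cubicModel

variable (g : E) (H : E →L[ℝ] E) (σ : ℝ)

theorem apply_add_smul (s v : E) (α : ℝ) :
    cubicModel g H σ (s + α • v) = cubicModel g H σ s
      + α * (⟪g, v⟫ + (⟪s, H v⟫ + ⟪v, H s⟫) / 2) + α ^ 2 / 2 * ⟪v, H v⟫
      + σ / 6 * (‖s + α • v‖ ^ 3 - ‖s‖ ^ 3) := by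
  simp only [cubicModel, inner_add_left, inner_add_right, map_add, map_smul,
    real_inner_smul_left, real_inner_smul_right]
  ring

theorem hasDerivAt_add_smul (s v : E) :
    HasDerivAt (fun α : ℝ => cubicModel g H σ (s + α • v))
      (⟪g, v⟫ + (⟪s, H v⟫ + ⟪v, H s⟫) / 2 + σ / 2 * ‖s‖ * ⟪s, v⟫) 0 := by
  have hline : HasDerivAt (fun α : ℝ => s + α • v) v 0 := by
    simpa using ((hasDerivAt_id (0 : ℝ)).smul_const v).const_add s
  have hcube : HasDerivAt (fun α : ℝ => ‖s + α • v‖ ^ 3) (3 * ‖s‖ * ⟪s, v⟫) 0 := by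
    have := (hasFDerivAt_norm_rpow s (by norm_num : (1 : ℝ) < 3)).comp_hasDerivAt_of_eq 0 hline
      (by simp)
    norm_num [Function.comp_def] at this
    exact this
  have hquad := hline.inner ℝ ((H.hasFDerivAt (x := s)).comp_hasDerivAt_of_eq 0 hline (by simp))
  refine ((((hasDerivAt_const 0 g).inner ℝ hline).add (hquad.const_mul (1 / 2))).add
    (hcube.const_mul (σ / 6))).congr_deriv ?_
  simp only [Function.comp_apply, zero_smul, add_zero, inner_zero_left]
  ring

variable {g H σ} {s : E} (hmin : ∀ t, cubicModel g H σ s ≤ cubicModel g H σ t)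
include hmin

theorem stationary (v : E) :
    ⟪g, v⟫ + (⟪s, H v⟫ + ⟪v, H s⟫) / 2 + σ / 2 * ‖s‖ * ⟪s, v⟫ = 0 := by
  refine IsLocalMin.hasDerivAt_eq_zero (.of_forall fun α => ?_) (hasDerivAt_add_smul g H σ s v)
  simpa using hmin (s + α • v)

theorem sq_mul_nonneg_of_norm_add_smul_eq {v : E} {α : ℝ} (hα : ‖s + α • v‖ = ‖s‖) :
    0 ≤ α ^ 2 * (⟪v, H v⟫ + σ / 2 * ‖s‖ * ‖v‖ ^ 2) := by
  have hdescent := hmin (s + α • v)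
  rw [apply_add_smul, hα] at hdescent
  have hsphere : 2 * α * ⟪s, v⟫ + α ^ 2 * ‖v‖ ^ 2 = 0 := by
    have := norm_add_sq_real s (α • v)
    rw [hα, real_inner_smul_right, norm_smul, Real.norm_eq_abs, mul_pow, sq_abs] at this
    linarith
  have hstat := stationary hmin v
  linear_combination 2 * hdescent - σ / 2 * ‖s‖ * hsphere + 2 * α * hstat

theorem shift_nonneg_of_inner_ne_zero {v : E} (hv : ⟪s, v⟫ ≠ 0) :
    0 ≤ ⟪v, H v⟫ + σ / 2 * ‖s‖ * ‖v‖ ^ 2 := by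
  have hv0 : ‖v‖ ≠ 0 := by rintro h; simp_all [norm_eq_zero.mp h]
  set α := -2 * ⟪s, v⟫ / ‖v‖ ^ 2
  have hα : α * ‖v‖ ^ 2 = -2 * ⟪s, v⟫ := div_mul_cancel₀ _ (pow_ne_zero 2 hv0)
  have hα0 : α ≠ 0 := by rintro h; simp [h] at hα; exact hv hα
  have hnorm : ‖s + α • v‖ = ‖s‖ := by
    refine (sq_eq_sq₀ (norm_nonneg _) (norm_nonneg _)).mp ?_
    rw [norm_add_sq_real, real_inner_smul_right, norm_smul, Real.norm_eq_abs, mul_pow, sq_abs]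
    linear_combination α * hα
  exact (mul_nonneg_iff_of_pos_left (by positivity)).mp
    (sq_mul_nonneg_of_norm_add_smul_eq hmin hnorm)

theorem shift_nonneg_of_ne_zero (hs : s ≠ 0) (v : E) :
    0 ≤ ⟪v, H v⟫ + σ / 2 * ‖s‖ * ‖v‖ ^ 2 := by
  rcases eq_or_ne ⟪s, v⟫ 0 with hv | hv
  · have := nonneg_at_zero_of_forall_ne_zero
      (φ := fun ε : ℝ => ⟪v + ε • s, H (v + ε • s)⟫ + σ / 2 * ‖s‖ * ‖v + ε • s‖ ^ 2)
      (by fun_prop) fun ε hε => shift_nonneg_of_inner_ne_zero hmin ?_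
    · simpa using this
    rw [inner_add_right, hv, real_inner_smul_right, real_inner_self_eq_norm_sq, zero_add]
    exact mul_ne_zero hε (by positivity)
  · exact shift_nonneg_of_inner_ne_zero hmin hv

theorem inner_apply_self_nonneg_of_eq_zero (hs : s = 0) (v : E) : 0 ≤ ⟪v, H v⟫ := by
  subst hs
  have hg : ⟪g, v⟫ = 0 := by simpa using stationary hmin v
  have := nonneg_at_zero_of_forall_ne_zero (φ := fun α : ℝ => ⟪v, H v⟫ + σ / 3 * |α| * ‖v‖ ^ 3)
    (by fun_prop) fun α hα => ?_
  · simpa using this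
  have hdescent := hmin (0 + α • v)
  rw [apply_add_smul] at hdescent
  simp only [hg, zero_add, inner_zero_left, map_zero, inner_zero_right, norm_zero, norm_smul,
    Real.norm_eq_abs] at hdescent
  refine (mul_nonneg_iff_of_pos_left (by positivity : 0 < α ^ 2)).mp ?_
  have hcube : (|α| * ‖v‖) ^ 3 = α ^ 2 * |α| * ‖v‖ ^ 3 := by rw [← sq_abs α]; ring
  linear_combination 2 * hdescent + σ / 3 * hcube

theorem shift_nonneg (v : E) : 0 ≤ ⟪v, H v⟫ + σ / 2 * ‖s‖ * ‖v‖ ^ 2 := by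
  rcases eq_or_ne s 0 with hs | hs
  · simpa [hs] using inner_apply_self_nonneg_of_eq_zero hmin hs v
  · exact shift_nonneg_of_ne_zero hmin hs v

end cubicModel

theorem stmt4_general {d : ℕ} (f : EuclideanSpace ℝ (Fin d) → ℝ)
    (x : EuclideanSpace ℝ (Fin d)) (σ : ℝ)
    (m : EuclideanSpace ℝ (Fin d) → ℝ)
    (hm : ∀ t, m t = f x + ⟪gradient f x, t⟫
        + (1 / 2) * ⟪t, fderiv ℝ (gradient f) x t⟫ + σ / 6 * ‖t‖ ^ 3)
    (s : EuclideanSpace ℝ (Fin d)) (hmin : ∀ t, m s ≤ m t) :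
    ∀ v : EuclideanSpace ℝ (Fin d),
      ⟪v, fderiv ℝ (gradient f) x v⟫ + σ / 2 * ‖s‖ * ‖v‖ ^ 2 ≥ 0 := by
  have hm' : ∀ t, m t = f x + cubicModel (gradient f x) (fderiv ℝ (gradient f) x) σ t := by
    intro t
    rw [hm, cubicModel]
    ring
  exact cubicModel.shift_nonneg fun t => by simpa only [hm', add_le_add_iff_left] using hmin t

/-- If s is a global minimizer of the cubic model m(s) with parameter σ > 0, then
∇²f(x) + (σ/2)‖s‖·I is positive semidefinite; in particular, for every direction v,
⟪v, (∇²f(x))v⟫ + (σ/2)‖s‖‖v‖² ≥ 0, i.e. λ_min(∇²f(x)) ≥ −(σ/2)‖s‖. -/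
theorem stmt4 {d : ℕ} (f : EuclideanSpace ℝ (Fin d) → ℝ) (hf : ContDiff ℝ 2 f)
    (x : EuclideanSpace ℝ (Fin d)) (σ : ℝ) (hσ : 0 < σ)
    (m : EuclideanSpace ℝ (Fin d) → ℝ)
    (hm : ∀ t, m t = f x + ⟪gradient f x, t⟫
        + (1 / 2) * ⟪t, fderiv ℝ (gradient f) x t⟫ + σ / 6 * ‖t‖ ^ 3)
    (s : EuclideanSpace ℝ (Fin d)) (hmin : ∀ t, m s ≤ m t) :
    ∀ v : EuclideanSpace ℝ (Fin d),
      ⟪v, fderiv ℝ (gradient f) x v⟫ + σ / 2 * ‖s‖ * ‖v‖ ^ 2 ≥ 0 :=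
  stmt4_general f x σ m hm s hmin
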